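/- Let R and S be bornological V-algebras. Then the linear growth bornology of the bornological tensor product R ⊗ S equals the tensor product of the linear growth bornologies of R and S, i.e. (R ⊗ S)^{lg-bornology} = R^{lg-bornology} ⊗ S^{lg-bornology}; consequently the linear growth completion of R ⊗ S is naturally isomorphic to the complete bornological tensor product of the linear growth completions of R and of S. -/

import Mathlib

/-! The tensor bornology `𝓣'` of the two linear growth bornologies is an algebra bornology
containing the tensor bornology of `R ⊗ S`, and its bounded submodules have spectral radius at most
one: for `P ⊆ M ⊗ N` and large `n`, `r⁻ⁿ ⋆ Pⁿ ⊆ (s⁻ⁿ ⋆ Mⁿ) ⊗ (s⁻ⁿ ⋆ Nⁿ)` with `s = r^(1/4)`.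
Minimality of the linear growth bornology of `R ⊗ S` then makes it smaller than `𝓣'`. Conversely,
the inclusions `R → R ⊗ S ← S` are bounded algebra maps, so they stay bounded for the linear
growth bornologies, and `m ⊗ n = (m ⊗ 1)(1 ⊗ n)`.

For the completions, a bounded bilinear map `b : X × Y → Z` extends to the completion of one
factor at a time. The extensions `ψ x` of the maps `b x` are bounded uniformly for `x` in a bounded
set `s` because they are all evaluations of a single bounded extension of `Y → (s → Z)`, with
values in the complete module of bounded functions `s → Z`. -/

open Pointwise

universe u v w

/-- A (convex) bornology on a `V`-module `X`: a family of *bounded* subsets containing all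
finite subsets, closed under subsets and finite unions, and such that the `V`-submodule
generated by a bounded subset is again bounded. -/
structure ModBornology (V : Type u) [CommRing V] (X : Type v) [AddCommGroup X] [Module V X] :
    Type v where
  IsBounded : Set X → Prop
  isBounded_of_finite : ∀ ⦃s : Set X⦄, s.Finite → IsBounded s
  isBounded_subset : ∀ ⦃s t : Set X⦄, IsBounded t → s ⊆ t → IsBounded s
  isBounded_union : ∀ ⦃s t : Set X⦄, IsBounded s → IsBounded t → IsBounded (s ∪ t)
  isBounded_span : ∀ ⦃s : Set X⦄, IsBounded s → IsBounded (Submodule.span V s : Set X)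

namespace Born

variable {V : Type u} [CommRing V] {X : Type v} [AddCommGroup X] [Module V X]
  {Y : Type w} [AddCommGroup Y] [Module V Y]

/-- `δ n → 0` in the `π`-adic topology on `V`. -/
def TendstoPiAdic (π : V) (δ : ℕ → V) : Prop :=
  ∀ m : ℕ, ∃ N : ℕ, ∀ n ≥ N, π ^ m ∣ δ n

/-- The sequence `x` `S`-converges to `l`. -/
def SConvTo (π : V) (S : Set X) (x : ℕ → X) (l : X) : Prop :=
  ∃ δ : ℕ → V, TendstoPiAdic π δ ∧ ∀ n : ℕ, x n - l ∈ δ n • S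

/-- The sequence `x` converges (bornologically) to `l`. -/
def ConvTo (π : V) (𝓑 : ModBornology V X) (x : ℕ → X) (l : X) : Prop :=
  ∃ S : Set X, 𝓑.IsBounded S ∧ SConvTo π S x l

/-- The sequence `x` is `S`-Cauchy. -/
def SCauchy (π : V) (S : Set X) (x : ℕ → X) : Prop :=
  ∃ δ : ℕ → V, TendstoPiAdic π δ ∧ ∀ l n m : ℕ, l ≤ n → l ≤ m → x n - x m ∈ δ l • S

/-- A bornological `V`-module is separated if limits of convergent sequences are unique. -/
def BornSeparated (π : V) (𝓑 : ModBornology V X) : Prop :=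
  ∀ (x : ℕ → X) (l₁ l₂ : X), ConvTo π 𝓑 x l₁ → ConvTo π 𝓑 x l₂ → l₁ = l₂

/-- A bornological `V`-module is complete if it is separated and every `S`-Cauchy sequence
`S'`-converges for some bounded `S'` depending only on `S`. -/
def BornComplete (π : V) (𝓑 : ModBornology V X) : Prop :=
  BornSeparated π 𝓑 ∧ ∀ S : Set X, 𝓑.IsBounded S → ∃ S' : Set X, 𝓑.IsBounded S' ∧
    ∀ x : ℕ → X, SCauchy π S x → ∃ l : X, SConvTo π S' x l

/-- A linear map is bounded if it maps bounded sets to bounded sets. -/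
def BoundedMap (𝓑X : ModBornology V X) (𝓑Y : ModBornology V Y) (f : X →ₗ[V] Y) : Prop :=
  ∀ ⦃s : Set X⦄, 𝓑X.IsBounded s → 𝓑Y.IsBounded (f '' s)

end Born

namespace Born

variable {V : Type u} [CommRing V] {X : Type v} [AddCommGroup X] [Module V X]
  {C : Type w} [AddCommGroup C] [Module V C]

/-- `(C, 𝓑C, ι)` is *the* (bornological) completion of `(X, 𝓑X)`: `C` is complete, `ι` is
bounded, and every bounded linear map from `X` to a complete bornological `V`-module
factors uniquely through `ι`. -/
def IsCompletion (π : V) (𝓑X : ModBornology V X) (𝓑C : ModBornology V C)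
    (ι : X →ₗ[V] C) : Prop :=
  BornComplete π 𝓑C ∧ BoundedMap 𝓑X 𝓑C ι ∧
    ∀ (Y : Type (max u v w)) (_ : AddCommGroup Y) (_ : Module V Y) (𝓑Y : ModBornology V Y),
      BornComplete π 𝓑Y → ∀ f : X →ₗ[V] Y, BoundedMap 𝓑X 𝓑Y f →
        ∃! g : C →ₗ[V] Y, BoundedMap 𝓑C 𝓑Y g ∧ g.comp ι = f

end Born

namespace Born

section SpectralRadius

variable {V : Type u} [CommRing V]

/-- `⌈log_ε r⌉`, the exponent appearing in the operation `r ⋆ M = π ^ ⌈log_ε r⌉ • M`. -/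
noncomputable def cexp (ε r : ℝ) : ℤ := ⌈Real.log r / Real.log ε⌉

section Valg

variable {A : Type v} [Ring A] [Algebra V A]

/-- An algebra bornology: a module bornology for which multiplication is bounded. -/
def IsAlgBorn (𝓑 : ModBornology V A) : Prop :=
  ∀ ⦃s t : Set A⦄, 𝓑.IsBounded s → 𝓑.IsBounded t → 𝓑.IsBounded (s * t)

/-- `r ⋆ M = π ^ ⌈log_ε r⌉ • M` for `r ≤ 1` in a `V`-algebra (nonnegative exponent). -/
noncomputable def starV (π : V) (ε r : ℝ) (M : Submodule V A) : Submodule V A :=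
  π ^ ((cexp ε r).toNat) • M

/-- The submodule of finite sums `Σ_{n ≥ 0} r^{-n} ⋆ M ^ n`. -/
noncomputable def geomSumV (π : V) (ε r : ℝ) (M : Submodule V A) : Submodule V A :=
  ⨆ n : ℕ, starV π ε (r ^ (-(n : ℤ))) (M ^ n)

/-- `ρ(M) ≤ 1` in a bornological `V`-algebra: the submodule `Σ_{n} r^{-n} ⋆ M^n` is
bounded for every `r > 1`. -/
noncomputable def SpecLeOne (π : V) (ε : ℝ) (𝓑 : ModBornology V A) (M : Submodule V A) : Prop :=
  ∀ r : ℝ, 1 < r → 𝓑.IsBounded (geomSumV π ε r M : Set A)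

end Valg

section Kalg

variable (K : Type u) [Field K] [Algebra V K]
variable {A : Type v} [Ring A] [Algebra K A] [Algebra V A] [IsScalarTower V K A]

/-- Scalar multiplication by `c : K` as a `V`-linear map on a `K`-algebra. -/
noncomputable def kSmul (c : K) : A →ₗ[V] A :=
  LinearMap.restrictScalars V (LinearMap.lsmul K A c)

/-- `r ⋆ M = π ^ ⌈log_ε r⌉ • M` in a `K`-algebra (integer exponent). -/
noncomputable def starK (π : V) (ε r : ℝ) (M : Submodule V A) : Submodule V A :=
  M.map (kSmul K ((algebraMap V K π) ^ (cexp ε r)))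

/-- The submodule of finite sums `Σ_{n ≥ 0} r^{-n} ⋆ M ^ n` in a `K`-algebra. -/
noncomputable def geomSumK (π : V) (ε r : ℝ) (M : Submodule V A) : Submodule V A :=
  ⨆ n : ℕ, starK K π ε (r ^ (-(n : ℤ))) (M ^ n)

/-- The spectral radius of a bounded `V`-submodule `M` of a bornological `K`-algebra:
the infimum (in `ℝ≥0∞`) of all `r > 0` such that `Σ_n r^{-n} ⋆ M^n` is bounded. -/
noncomputable def specRad (π : V) (ε : ℝ) (𝓑 : ModBornology V A) (M : Submodule V A) : ENNReal :=
  sInf {ρ : ENNReal | ∃ r : ℝ, 0 < r ∧ ρ = ENNReal.ofReal r ∧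
    𝓑.IsBounded (geomSumK K π ε r M : Set A)}

/-- A bornological `K`-algebra structure: multiplication is bounded and multiplication
by `π⁻¹` (the inverse of multiplication by `π`) is bounded. -/
def IsKAlgBorn (π : V) (𝓑 : ModBornology V A) : Prop :=
  IsAlgBorn 𝓑 ∧ ∀ ⦃s : Set A⦄, 𝓑.IsBounded s → 𝓑.IsBounded (kSmul (V := V) K ((algebraMap V K π)⁻¹) '' s)

end Kalg

end SpectralRadius

end Born

namespace Born

variable {V : Type u} [CommRing V] {A : Type v} [Ring A] [Algebra V A]

/-- `𝓑 ≤ 𝓒` for bornologies: every `𝓑`-bounded set is `𝓒`-bounded. -/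
def BornLE (𝓑 𝓒 : ModBornology V A) : Prop :=
  ∀ ⦃s : Set A⦄, 𝓑.IsBounded s → 𝓒.IsBounded s

/-- `𝓛` is the linear growth bornology of the bornological `V`-algebra `(A, 𝓑)`:
the smallest algebra bornology containing `𝓑` all of whose bounded `V`-submodules have
spectral radius at most `1`. -/
noncomputable def IsLinGrowthBorn (π : V) (ε : ℝ) (𝓑 𝓛 : ModBornology V A) : Prop :=
  IsAlgBorn 𝓛 ∧ BornLE 𝓑 𝓛 ∧
  (∀ M : Submodule V A, 𝓛.IsBounded (M : Set A) → SpecLeOne π ε 𝓛 M) ∧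
  ∀ 𝓒 : ModBornology V A, IsAlgBorn 𝓒 → BornLE 𝓑 𝓒 →
    (∀ M : Submodule V A, 𝓒.IsBounded (M : Set A) → SpecLeOne π ε 𝓒 M) → BornLE 𝓛 𝓒

end Born

open Born
open scoped TensorProduct

namespace Born

variable {V : Type u} [CommRing V]

/-- `𝓣` is the (bornological) tensor product bornology on `X ⊗[V] Y`: a subset is bounded
iff it is contained in the image of `M ⊗ N` for bounded `V`-submodules `M ⊆ X`, `N ⊆ Y`. -/
def IsTensorBorn {X Y : Type u} [AddCommGroup X] [Module V X] [AddCommGroup Y] [Module V Y]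
    (𝓑X : ModBornology V X) (𝓑Y : ModBornology V Y)
    (𝓣 : ModBornology V (X ⊗[V] Y)) : Prop :=
  ∀ U : Set (X ⊗[V] Y), 𝓣.IsBounded U ↔ ∃ (M : Submodule V X) (N : Submodule V Y),
    𝓑X.IsBounded (M : Set X) ∧ 𝓑Y.IsBounded (N : Set Y) ∧
    U ⊆ (Submodule.span V (Set.image2 (· ⊗ₜ[V] ·) (M : Set X) (N : Set Y)) : Set (X ⊗[V] Y))

/-- A bilinear map is bounded if it maps pairs of bounded sets to bounded sets. -/
def BoundedBilin {X Y Z : Type u} [AddCommGroup X] [Module V X] [AddCommGroup Y] [Module V Y]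
    [AddCommGroup Z] [Module V Z]
    (𝓑X : ModBornology V X) (𝓑Y : ModBornology V Y) (𝓑Z : ModBornology V Z)
    (β : X →ₗ[V] Y →ₗ[V] Z) : Prop :=
  ∀ ⦃s : Set X⦄ ⦃t : Set Y⦄, 𝓑X.IsBounded s → 𝓑Y.IsBounded t →
    𝓑Z.IsBounded (Set.image2 (fun x y => β x y) s t)

end Born

namespace ModBornology

variable {V : Type u} [CommRing V] {X : Type v} [AddCommGroup X] [Module V X]
  (𝓑 : ModBornology V X)

theorem isBounded_of_subset_span {s B : Set X} (hB : 𝓑.IsBounded B)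
    (h : s ⊆ Submodule.span V B) : 𝓑.IsBounded s :=
  𝓑.isBounded_subset (𝓑.isBounded_span hB) h

theorem isBounded_sup {M N : Submodule V X} (hM : 𝓑.IsBounded (M : Set X))
    (hN : 𝓑.IsBounded (N : Set X)) : 𝓑.IsBounded ((M ⊔ N : Submodule V X) : Set X) := by
  have := 𝓑.isBounded_span (𝓑.isBounded_union hM hN)
  rwa [Submodule.span_union, Submodule.span_eq, Submodule.span_eq] at this

theorem isBounded_biUnion {ι : Type*} {I : Set ι} (hI : I.Finite) {f : ι → Set X}
    (h : ∀ i ∈ I, 𝓑.IsBounded (f i)) : 𝓑.IsBounded (⋃ i ∈ I, f i) := by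
  induction I, hI using Set.Finite.induction_on with
  | empty => simpa using 𝓑.isBounded_of_finite Set.finite_empty
  | @insert a I _ _ ih =>
    rw [Set.biUnion_insert]
    exact 𝓑.isBounded_union (h a (Set.mem_insert a I))
      (ih fun i hi => h i (Set.mem_insert_of_mem a hi))

def comap {Y : Type w} [AddCommGroup Y] [Module V Y] (f : X →ₗ[V] Y) (𝓑 : ModBornology V Y) :
    ModBornology V X where
  IsBounded s := 𝓑.IsBounded (f '' s)
  isBounded_of_finite _ hs := 𝓑.isBounded_of_finite (hs.image f)
  isBounded_subset _ _ ht hst := 𝓑.isBounded_subset ht (Set.image_mono hst)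
  isBounded_union _ _ hs ht := by
    simpa only [Set.image_union] using 𝓑.isBounded_union hs ht
  isBounded_span s hs := by
    simpa only [← Submodule.map_coe, Submodule.map_span] using 𝓑.isBounded_span hs

end ModBornology

namespace Born

section Modules

variable {V : Type u} [CommRing V] {X : Type v} [AddCommGroup X] [Module V X]
  {Y : Type w} [AddCommGroup Y] [Module V Y] {𝓑X : ModBornology V X} {𝓑Y : ModBornology V Y}

theorem BoundedMap.comp {Z : Type*} [AddCommGroup Z] [Module V Z] {𝓑Z : ModBornology V Z}
    {g : Y →ₗ[V] Z} {f : X →ₗ[V] Y} (hg : BoundedMap 𝓑Y 𝓑Z g) (hf : BoundedMap 𝓑X 𝓑Y f) :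
    BoundedMap 𝓑X 𝓑Z (g ∘ₗ f) := fun s hs => by
  simpa only [LinearMap.coe_comp, Set.image_comp] using hg (hf hs)

theorem BoundedMap.add {f g : X →ₗ[V] Y} (hf : BoundedMap 𝓑X 𝓑Y f)
    (hg : BoundedMap 𝓑X 𝓑Y g) : BoundedMap 𝓑X 𝓑Y (f + g) := by
  refine fun s hs => 𝓑Y.isBounded_of_subset_span (𝓑Y.isBounded_union (hf hs) (hg hs)) ?_
  rintro - ⟨x, hx, rfl⟩
  exact Submodule.add_mem _ (Submodule.subset_span (Or.inl ⟨x, hx, rfl⟩))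
    (Submodule.subset_span (Or.inr ⟨x, hx, rfl⟩))

theorem BoundedMap.smul {f : X →ₗ[V] Y} (c : V) (hf : BoundedMap 𝓑X 𝓑Y f) :
    BoundedMap 𝓑X 𝓑Y (c • f) := by
  refine fun s hs => 𝓑Y.isBounded_of_subset_span (hf hs) ?_
  rintro - ⟨x, hx, rfl⟩
  exact Submodule.smul_mem _ c (Submodule.subset_span ⟨x, hx, rfl⟩)

variable {π : V} {S : Set X} {x : ℕ → X} {l : X}

theorem SConvTo.map (f : X →ₗ[V] Y) (h : SConvTo π S x l) : SConvTo π (f '' S) (f ∘ x) (f l) := by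
  obtain ⟨δ, hδ, hx⟩ := h
  refine ⟨δ, hδ, fun n => ?_⟩
  rw [Function.comp_apply, ← map_sub, ← image_smul_set]
  exact Set.mem_image_of_mem f (hx n)

theorem ConvTo.map {f : X →ₗ[V] Y} (hf : BoundedMap 𝓑X 𝓑Y f) (h : ConvTo π 𝓑X x l) :
    ConvTo π 𝓑Y (f ∘ x) (f l) :=
  let ⟨S, hS, hx⟩ := h
  ⟨f '' S, hf hS, hx.map f⟩

theorem TendstoPiAdic.exists_pow_dvd {δ : ℕ → V} (hδ : TendstoPiAdic π δ) :
    ∃ ω : ℕ → ℕ, TendstoPiAdic π (fun n => π ^ ω n) ∧ ∀ n, π ^ ω n ∣ δ n := by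
  classical
  choose N hN using hδ
  -- `ω n` is the largest `m ≤ n` whose threshold `N m` has been passed by `n`
  refine ⟨fun n => Nat.findGreatest (fun m => N m ≤ n) n, fun m => ⟨max m (N m), fun n hn => ?_⟩,
    fun n => ?_⟩
  · exact pow_dvd_pow π (Nat.le_findGreatest (le_of_max_le_left hn) (le_of_max_le_right hn))
  · rcases Nat.eq_zero_or_pos (Nat.findGreatest (fun m => N m ≤ n) n) with h0 | hpos
    · simp only [h0, pow_zero, one_dvd]
    · obtain ⟨m, -, hmn, hm⟩ := Nat.findGreatest_pos.mp hpos
      exact hN _ n (Nat.findGreatest_spec (P := fun m => N m ≤ n) hmn hm)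

/-- A Cauchy sequence converges to its limit at the rate of its own Cauchy modulus, up to
enlarging the bounded set. -/
theorem sub_mem_pow_smul_span {S' : Set X} {δ : ℕ → V} {ω : ℕ → ℕ} (hω : ∀ n, π ^ ω n ∣ δ n)
    (hx : ∀ k n m : ℕ, k ≤ n → k ≤ m → x n - x m ∈ δ k • S) (hl : SConvTo π S' x l) (n : ℕ) :
    x n - l ∈ π ^ ω n • (Submodule.span V (S ∪ S') : Set X) := by
  obtain ⟨δ', hδ', hl⟩ := hl
  obtain ⟨N, hN⟩ := hδ' (ω n)
  set m := max n N
  obtain ⟨s, hs, hs'⟩ := Set.mem_smul_set.mp (hx n n m le_rfl (le_max_left n N))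
  obtain ⟨s', hs2, hs2'⟩ := Set.mem_smul_set.mp (hl m)
  obtain ⟨u, hu⟩ := hω n
  obtain ⟨u', hu'⟩ := hN m (le_max_right n N)
  refine ⟨u • s + u' • s', Submodule.add_mem _
    (Submodule.smul_mem _ _ (Submodule.subset_span (Or.inl hs)))
    (Submodule.smul_mem _ _ (Submodule.subset_span (Or.inr hs2))), ?_⟩
  rw [show x n - l = (x n - x m) + (x m - l) by abel, ← hs', ← hs2', hu, hu']
  simp only [smul_add, mul_smul]

end Modules

section Completion

variable {V : Type u} [CommRing V] {π : V} {X : Type v} [AddCommGroup X] [Module V X]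
  {C : Type w} [AddCommGroup C] [Module V C] {𝓑X : ModBornology V X} {𝓑C : ModBornology V C}
  {ι : X →ₗ[V] C} {Y : Type (max u v w)} [AddCommGroup Y] [Module V Y] {𝓑Y : ModBornology V Y}

theorem IsCompletion.exists_extension (hC : IsCompletion π 𝓑X 𝓑C ι) (hY : BornComplete π 𝓑Y)
    {f : X →ₗ[V] Y} (hf : BoundedMap 𝓑X 𝓑Y f) :
    ∃ g : C →ₗ[V] Y, BoundedMap 𝓑C 𝓑Y g ∧ g ∘ₗ ι = f :=
  (hC.2.2 Y _ _ 𝓑Y hY f hf).exists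

theorem IsCompletion.ext (hC : IsCompletion π 𝓑X 𝓑C ι) (hY : BornComplete π 𝓑Y)
    {g g' : C →ₗ[V] Y} (hg : BoundedMap 𝓑C 𝓑Y g) (hg' : BoundedMap 𝓑C 𝓑Y g')
    (h : g ∘ₗ ι = g' ∘ₗ ι) : g = g' :=
  (hC.2.2 Y _ _ 𝓑Y hY _ (hg.comp hC.2.1)).unique ⟨hg, rfl⟩ ⟨hg', h.symm⟩

end Completion

section BoundedFunctions

variable {V : Type u} [CommRing V] {C : Type v} [AddCommGroup C] [Module V C]
  (𝓑 : ModBornology V C) (α : Type w)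

def boundedFunctions : Submodule V (α → C) where
  carrier := {g | 𝓑.IsBounded (Set.range g)}
  add_mem' {f g} hf hg := by
    refine 𝓑.isBounded_of_subset_span (𝓑.isBounded_union hf hg) ?_
    rintro - ⟨a, rfl⟩
    exact Submodule.add_mem _ (Submodule.subset_span (Or.inl ⟨a, rfl⟩))
      (Submodule.subset_span (Or.inr ⟨a, rfl⟩))
  zero_mem' := 𝓑.isBounded_subset (𝓑.isBounded_of_finite (Set.finite_singleton 0))
    Set.range_const_subset
  smul_mem' c g hg := by
    refine 𝓑.isBounded_of_subset_span hg ?_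
    rintro - ⟨a, rfl⟩
    exact Submodule.smul_mem _ c (Submodule.subset_span ⟨a, rfl⟩)

variable {𝓑 α}

def boundedFunctions.eval (a : α) : boundedFunctions 𝓑 α →ₗ[V] C :=
  LinearMap.proj a ∘ₗ (boundedFunctions 𝓑 α).subtype

theorem boundedFunctions.apply_mem_of_mem_span {s : Set (boundedFunctions 𝓑 α)}
    {N : Submodule V C} (hs : ∀ g ∈ s, ∀ a, (g : α → C) a ∈ N) {g : boundedFunctions 𝓑 α}
    (hg : g ∈ Submodule.span V s) (a : α) : (g : α → C) a ∈ N := by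
  have hle : Submodule.span V s ≤
      ⨅ a, N.comap (boundedFunctions.eval a) :=
    Submodule.span_le.mpr fun g hg => Submodule.mem_iInf _ |>.mpr fun a => hs g hg a
  exact (Submodule.mem_iInf _).mp (hle hg) a

variable (𝓑 α)

def boundedFunctionsBorn : ModBornology V (boundedFunctions 𝓑 α) where
  IsBounded s := 𝓑.IsBounded (⋃ g ∈ s, Set.range (g : α → C))
  isBounded_of_finite _ hs := 𝓑.isBounded_biUnion hs fun g _ => g.2
  isBounded_subset _ _ ht hst := 𝓑.isBounded_subset ht (Set.biUnion_subset_biUnion_left hst)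
  isBounded_union _ _ hs ht := by
    rw [Set.biUnion_union]
    exact 𝓑.isBounded_union hs ht
  isBounded_span s hs := by
    refine 𝓑.isBounded_of_subset_span hs ?_
    simp only [Set.iUnion_subset_iff, SetLike.mem_coe]
    rintro g hg - ⟨a, rfl⟩
    refine boundedFunctions.apply_mem_of_mem_span (fun g hg a => ?_) hg a
    exact Submodule.subset_span (Set.mem_biUnion hg ⟨a, rfl⟩)

variable {𝓑 α}

theorem boundedFunctions.boundedMap_eval (a : α) :
    BoundedMap (boundedFunctionsBorn 𝓑 α) 𝓑 (boundedFunctions.eval a) := by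
  refine fun s hs => 𝓑.isBounded_subset hs ?_
  rintro - ⟨g, hg, rfl⟩
  exact Set.mem_biUnion hg ⟨a, rfl⟩

variable {π : V}

theorem boundedFunctionsBorn_separated (hC : BornSeparated π 𝓑) :
    BornSeparated π (boundedFunctionsBorn 𝓑 α) := fun _ _ _ h₁ h₂ =>
  Subtype.ext <| funext fun a => hC _ _ _
    (h₁.map (boundedFunctions.boundedMap_eval a)) (h₂.map (boundedFunctions.boundedMap_eval a))

theorem exists_sConvTo_boundedFunctions {x : ℕ → boundedFunctions 𝓑 α} {l : α → C}
    {D : Submodule V C} (hD : 𝓑.IsBounded (D : Set C)) {ω : ℕ → ℕ}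
    (hω : TendstoPiAdic π (fun n => π ^ ω n))
    (hx : ∀ n a, (x n : α → C) a - l a ∈ π ^ ω n • (D : Set C)) :
    ∃ hl : l ∈ boundedFunctions 𝓑 α,
      SConvTo π {g : boundedFunctions 𝓑 α | ∀ a, (g : α → C) a ∈ D} x ⟨l, hl⟩ := by
  choose y hyD hy using fun n a => Set.mem_smul_set.mp (hx n a)
  have hyb : ∀ n, y n ∈ boundedFunctions 𝓑 α := fun n =>
    𝓑.isBounded_subset hD (Set.range_subset_iff.mpr (hyD n))
  have hl : l ∈ boundedFunctions 𝓑 α := by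
    refine 𝓑.isBounded_of_subset_span (𝓑.isBounded_union (x 0).2 hD) ?_
    rintro - ⟨a, rfl⟩
    rw [show l a = (x 0 : α → C) a - π ^ ω 0 • y 0 a by rw [hy, sub_sub_cancel]]
    exact Submodule.sub_mem _ (Submodule.subset_span (Or.inl ⟨a, rfl⟩))
      (Submodule.smul_mem _ _ (Submodule.subset_span (Or.inr (hyD 0 a))))
  refine ⟨hl, fun n => π ^ ω n, hω, fun n => ⟨⟨y n, hyb n⟩, hyD n, ?_⟩⟩
  exact Subtype.ext <| funext fun a => hy n a

theorem boundedFunctionsBorn_complete (hC : BornComplete π 𝓑) :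
    BornComplete π (boundedFunctionsBorn 𝓑 α) := by
  refine ⟨boundedFunctionsBorn_separated hC.1, fun s hs => ?_⟩
  set B := ⋃ g ∈ s, Set.range (g : α → C)
  obtain ⟨B', hB', hlim⟩ := hC.2 B hs
  set D := Submodule.span V (B ∪ B')
  have hD : 𝓑.IsBounded (D : Set C) := 𝓑.isBounded_span (𝓑.isBounded_union hs hB')
  refine ⟨{g : boundedFunctions 𝓑 α | ∀ a, (g : α → C) a ∈ D}, 𝓑.isBounded_subset hD ?_,
    fun x ⟨δ, hδ, hx⟩ => ?_⟩
  · simp only [Set.iUnion_subset_iff]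
    rintro g hg - ⟨a, rfl⟩
    exact hg a
  have hxa : ∀ a k n m, k ≤ n → k ≤ m → (x n : α → C) a - (x m : α → C) a ∈ δ k • B := by
    intro a k n m hkn hkm
    have := Set.mem_image_of_mem (boundedFunctions.eval a) (hx k n m hkn hkm)
    rw [image_smul_set, map_sub] at this
    refine Set.smul_set_mono ?_ this
    rintro - ⟨g, hg, rfl⟩
    exact Set.mem_biUnion hg ⟨a, rfl⟩
  choose l hl using fun a => hlim _ ⟨δ, hδ, hxa a⟩
  obtain ⟨ω, hω, hωδ⟩ := hδ.exists_pow_dvd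
  obtain ⟨_, hconv⟩ := exists_sConvTo_boundedFunctions hD hω
    fun n a => sub_mem_pow_smul_span hωδ (hxa a) (hl a) n
  exact ⟨_, hconv⟩

end BoundedFunctions

section Bilinear

variable {V : Type u} [CommRing V] {π : V} {X Y Z : Type u} [AddCommGroup X] [Module V X]
  [AddCommGroup Y] [Module V Y] [AddCommGroup Z] [Module V Z] {𝓑X : ModBornology V X}
  {𝓑Y : ModBornology V Y} {𝓑Z : ModBornology V Z} {b : X →ₗ[V] Y →ₗ[V] Z}

theorem BoundedBilin.boundedMap_apply (hb : BoundedBilin 𝓑X 𝓑Y 𝓑Z b) (x : X) :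
    BoundedMap 𝓑Y 𝓑Z (b x) := fun _ ht => by
  simpa only [Set.image2_singleton_left] using
    hb (𝓑X.isBounded_of_finite (Set.finite_singleton x)) ht

theorem BoundedBilin.flip (hb : BoundedBilin 𝓑X 𝓑Y 𝓑Z b) :
    BoundedBilin 𝓑Y 𝓑X 𝓑Z b.flip := by
  intro _ _ ht hs
  have := hb hs ht
  rwa [Set.image2_swap] at this

theorem BoundedBilin.compr₂ {W : Type u} [AddCommGroup W] [Module V W] {𝓑W : ModBornology V W}
    {f : Z →ₗ[V] W} (hb : BoundedBilin 𝓑X 𝓑Y 𝓑Z b) (hf : BoundedMap 𝓑Z 𝓑W f) :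
    BoundedBilin 𝓑X 𝓑Y 𝓑W (b.compr₂ f) := by
  intro _ _ hs ht
  have := hf (hb hs ht)
  rwa [Set.image_image2] at this

theorem BoundedBilin.compl₁₂ {X' Y' : Type u} [AddCommGroup X'] [Module V X'] [AddCommGroup Y']
    [Module V Y'] {𝓑X' : ModBornology V X'} {𝓑Y' : ModBornology V Y'} {f : X' →ₗ[V] X}
    {g : Y' →ₗ[V] Y} (hb : BoundedBilin 𝓑X 𝓑Y 𝓑Z b) (hf : BoundedMap 𝓑X' 𝓑X f)
    (hg : BoundedMap 𝓑Y' 𝓑Y g) : BoundedBilin 𝓑X' 𝓑Y' 𝓑Z (b.compl₁₂ f g) := by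
  intro _ _ hs ht
  simpa only [LinearMap.compl₁₂_apply, Set.image2_image_left, Set.image2_image_right] using
    hb (hf hs) (hg ht)

variable {CX CY : Type u} [AddCommGroup CX] [Module V CX] [AddCommGroup CY] [Module V CY]
  {𝓑CX : ModBornology V CX} {𝓑CY : ModBornology V CY} {ιX : X →ₗ[V] CX} {ιY : Y →ₗ[V] CY}

theorem BoundedBilin.ext_of_isCompletion (hCX : IsCompletion π 𝓑X 𝓑CX ιX)
    (hCY : IsCompletion π 𝓑Y 𝓑CY ιY) (hZ : BornComplete π 𝓑Z) {b b' : CX →ₗ[V] CY →ₗ[V] Z}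
    (hb : BoundedBilin 𝓑CX 𝓑CY 𝓑Z b) (hb' : BoundedBilin 𝓑CX 𝓑CY 𝓑Z b')
    (h : ∀ x y, b (ιX x) (ιY y) = b' (ιX x) (ιY y)) : b = b' := by
  have hι : ∀ x, b (ιX x) = b' (ιX x) := fun x =>
    hCY.ext hZ (hb.boundedMap_apply _) (hb'.boundedMap_apply _) (LinearMap.ext (h x))
  have hflip : ∀ y, b.flip y = b'.flip y := fun y =>
    hCX.ext hZ (hb.flip.boundedMap_apply y) (hb'.flip.boundedMap_apply y)
      (LinearMap.ext fun x => by simp only [LinearMap.comp_apply, LinearMap.flip_apply, hι])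
  ext x y
  exact LinearMap.congr_fun (hflip y) x

theorem BoundedBilin.isBounded_image2_of_extension (hCY : IsCompletion π 𝓑Y 𝓑CY ιY)
    (hZ : BornComplete π 𝓑Z) (hb : BoundedBilin 𝓑X 𝓑Y 𝓑Z b) {ψ : X → CY →ₗ[V] Z}
    (hψ : ∀ x, BoundedMap 𝓑CY 𝓑Z (ψ x)) (hψι : ∀ x, ψ x ∘ₗ ιY = b x) {s : Set X} {t : Set CY}
    (hs : 𝓑X.IsBounded s) (ht : 𝓑CY.IsBounded t) :
    𝓑Z.IsBounded (Set.image2 (fun x y => ψ x y) s t) := by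
  have hrange : ∀ t' : Set Y, (⋃ y ∈ t', Set.range fun x : s => b x y) ⊆
      Set.image2 (fun x y => b x y) s t' := by
    intro t' z hz
    simp only [Set.mem_iUnion, Set.mem_range] at hz
    obtain ⟨y, hy, x, rfl⟩ := hz
    exact Set.mem_image2_of_mem x.2 hy
  let Φ : Y →ₗ[V] boundedFunctions 𝓑Z s :=
    (LinearMap.pi fun x : s => b x).codRestrict _ fun y =>
      𝓑Z.isBounded_subset (hb hs (𝓑Y.isBounded_of_finite (Set.finite_singleton y)))
        (subset_trans (Set.subset_biUnion_of_mem (u := fun y => Set.range fun x : s => b x y)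
          (Set.mem_singleton y)) (hrange {y}))
  have hΦ : BoundedMap 𝓑Y (boundedFunctionsBorn 𝓑Z s) Φ := fun t' ht' => by
    refine 𝓑Z.isBounded_subset (hb hs ht') (subset_trans ?_ (hrange t'))
    simp only [Set.iUnion_subset_iff]
    rintro - ⟨y, hy, rfl⟩
    exact Set.subset_biUnion_of_mem (u := fun y => Set.range fun x : s => b x y) hy
  obtain ⟨G, hG, hGι⟩ := hCY.exists_extension (boundedFunctionsBorn_complete hZ) hΦ
  have hev : ∀ x : s, boundedFunctions.eval x ∘ₗ G = ψ x := fun x =>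
    hCY.ext hZ ((boundedFunctions.boundedMap_eval x).comp hG) (hψ x) <| by
      rw [LinearMap.comp_assoc, hGι, hψι]
      rfl
  refine 𝓑Z.isBounded_subset (hG ht) ?_
  rintro - ⟨x, hx, y, hy, rfl⟩
  have hxy : ψ x y = (G y : s → Z) ⟨x, hx⟩ := (LinearMap.congr_fun (hev ⟨x, hx⟩) y).symm
  show ψ x y ∈ _
  rw [hxy]
  exact Set.mem_biUnion (Set.mem_image_of_mem G hy) ⟨⟨x, hx⟩, rfl⟩

theorem BoundedBilin.exists_extend_right (hCY : IsCompletion π 𝓑Y 𝓑CY ιY)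
    (hZ : BornComplete π 𝓑Z) (hb : BoundedBilin 𝓑X 𝓑Y 𝓑Z b) :
    ∃ b' : X →ₗ[V] CY →ₗ[V] Z, BoundedBilin 𝓑X 𝓑CY 𝓑Z b' ∧ ∀ x y, b' x (ιY y) = b x y := by
  choose ψ hψ hψι using fun x => hCY.exists_extension hZ (hb.boundedMap_apply x)
  let b' : X →ₗ[V] CY →ₗ[V] Z :=
    { toFun := ψ
      map_add' := fun x x' => hCY.ext hZ (hψ _) ((hψ x).add (hψ x')) <| by
        rw [hψι, LinearMap.add_comp, hψι, hψι, map_add]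
      map_smul' := fun c x => hCY.ext hZ (hψ _) ((hψ x).smul c) <| by
        rw [hψι, LinearMap.smul_comp, hψι, map_smul]
        rfl }
  exact ⟨b', fun _ _ hs ht => hb.isBounded_image2_of_extension hCY hZ hψ hψι hs ht,
    fun x y => LinearMap.congr_fun (hψι x) y⟩

end Bilinear

section TensorBornology

variable {V : Type u} [CommRing V] {X Y : Type u} [AddCommGroup X] [Module V X] [AddCommGroup Y]
  [Module V Y] {𝓑X : ModBornology V X} {𝓑Y : ModBornology V Y} {𝓣 : ModBornology V (X ⊗[V] Y)}

def tensorSpan (M : Submodule V X) (N : Submodule V Y) : Submodule V (X ⊗[V] Y) :=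
  Submodule.span V (Set.image2 (· ⊗ₜ[V] ·) (M : Set X) (N : Set Y))

theorem IsTensorBorn.isBounded_tensorSpan (h : IsTensorBorn 𝓑X 𝓑Y 𝓣) {M : Submodule V X}
    {N : Submodule V Y} (hM : 𝓑X.IsBounded (M : Set X)) (hN : 𝓑Y.IsBounded (N : Set Y)) :
    𝓣.IsBounded (tensorSpan M N : Set (X ⊗[V] Y)) :=
  (h _).mpr ⟨M, N, hM, hN, subset_rfl⟩

theorem IsTensorBorn.boundedBilin_mk (h : IsTensorBorn 𝓑X 𝓑Y 𝓣) :
    BoundedBilin 𝓑X 𝓑Y 𝓣 (TensorProduct.mk V X Y) := fun _ _ hs ht =>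
  𝓣.isBounded_subset (h.isBounded_tensorSpan (𝓑X.isBounded_span hs) (𝓑Y.isBounded_span ht))
    (Submodule.subset_span.trans' (Set.image2_subset Submodule.subset_span Submodule.subset_span))

theorem IsTensorBorn.boundedMap_lift {Z : Type u} [AddCommGroup Z] [Module V Z]
    {𝓑Z : ModBornology V Z} {b : X →ₗ[V] Y →ₗ[V] Z} (h : IsTensorBorn 𝓑X 𝓑Y 𝓣)
    (hb : BoundedBilin 𝓑X 𝓑Y 𝓑Z b) : BoundedMap 𝓣 𝓑Z (TensorProduct.lift b) := by
  intro U hU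
  obtain ⟨M, N, hM, hN, hU⟩ := (h U).mp hU
  refine 𝓑Z.isBounded_of_subset_span (hb hM hN) ((Set.image_mono hU).trans ?_)
  rw [← Submodule.map_coe, Submodule.map_span, Set.image_image2]
  simp only [TensorProduct.lift.tmul]
  rfl

variable {π : V} {CX CY CT : Type u} [AddCommGroup CX] [Module V CX] [AddCommGroup CY]
  [Module V CY] [AddCommGroup CT] [Module V CT] {𝓑CX : ModBornology V CX}
  {𝓑CY : ModBornology V CY} {𝓑CT : ModBornology V CT} {ιX : X →ₗ[V] CX} {ιY : Y →ₗ[V] CY}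
  {ιT : X ⊗[V] Y →ₗ[V] CT}

theorem IsTensorBorn.exists_universal_bilin_of_isCompletion (hT : IsTensorBorn 𝓑X 𝓑Y 𝓣)
    (hCX : IsCompletion π 𝓑X 𝓑CX ιX) (hCY : IsCompletion π 𝓑Y 𝓑CY ιY)
    (hCT : IsCompletion π 𝓣 𝓑CT ιT) :
    ∃ β : CX →ₗ[V] CY →ₗ[V] CT,
      BoundedBilin 𝓑CX 𝓑CY 𝓑CT β ∧
      (∀ x y, β (ιX x) (ιY y) = ιT (x ⊗ₜ[V] y)) ∧
      ∀ (W : Type u) (_ : AddCommGroup W) (_ : Module V W) (𝓑W : ModBornology V W),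
        BornComplete π 𝓑W → ∀ γ : CX →ₗ[V] CY →ₗ[V] W, BoundedBilin 𝓑CX 𝓑CY 𝓑W γ →
        ∃! h : CT →ₗ[V] W, BoundedMap 𝓑CT 𝓑W h ∧ ∀ x y, h (β x y) = γ x y := by
  obtain ⟨β₁, hβ₁, hβ₁ι⟩ := (hT.boundedBilin_mk.compr₂ hCT.2.1).exists_extend_right hCY hCT.1
  obtain ⟨β₂, hβ₂, hβ₂ι⟩ := hβ₁.flip.exists_extend_right hCX hCT.1
  have hβι : ∀ x y, β₂.flip (ιX x) (ιY y) = ιT (x ⊗ₜ[V] y) := fun x y =>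
    (hβ₂ι (ιY y) x).trans (hβ₁ι x y)
  refine ⟨β₂.flip, hβ₂.flip, hβι, fun W _ _ 𝓑W hW γ hγ => ?_⟩
  obtain ⟨h, hh, hhι⟩ :=
    hCT.exists_extension hW (hT.boundedMap_lift (hγ.compl₁₂ hCX.2.1 hCY.2.1))
  have hhβ : ∀ x y, h (ιT (x ⊗ₜ[V] y)) = γ (ιX x) (ιY y) := fun x y => by
    rw [← LinearMap.comp_apply, hhι, TensorProduct.lift.tmul, LinearMap.compl₁₂_apply]
  refine ⟨h, ⟨hh, fun x y => ?_⟩, fun h' ⟨hh', hh'β⟩ => ?_⟩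
  · have hγ' : β₂.flip.compr₂ h = γ := (hβ₂.flip.compr₂ hh).ext_of_isCompletion hCX hCY hW hγ
      fun x y => by rw [LinearMap.compr₂_apply, hβι, hhβ]
    exact LinearMap.congr_fun₂ hγ' x y
  · refine hCT.ext hW hh' hh (TensorProduct.ext' fun x y => ?_)
    rw [LinearMap.comp_apply, LinearMap.comp_apply, ← hβι, hh'β, hβι, hhβ]

end TensorBornology

section Algebra

variable {V : Type u} [CommRing V] {A : Type v} [Ring A] [Algebra V A] {𝓑 : ModBornology V A}

theorem isBounded_one (𝓑 : ModBornology V A) : 𝓑.IsBounded ((1 : Submodule V A) : Set A) := by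
  rw [Submodule.one_eq_span]
  exact 𝓑.isBounded_span (𝓑.isBounded_of_finite (Set.finite_singleton 1))

theorem IsAlgBorn.isBounded_mul (h : IsAlgBorn 𝓑) {M N : Submodule V A}
    (hM : 𝓑.IsBounded (M : Set A)) (hN : 𝓑.IsBounded (N : Set A)) :
    𝓑.IsBounded ((M * N : Submodule V A) : Set A) := by
  rw [Submodule.mul_eq_span_mul_set]
  exact 𝓑.isBounded_span (h hM hN)

theorem IsAlgBorn.isBounded_pow (h : IsAlgBorn 𝓑) {M : Submodule V A}
    (hM : 𝓑.IsBounded (M : Set A)) (n : ℕ) : 𝓑.IsBounded ((M ^ n : Submodule V A) : Set A) := by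
  induction n with
  | zero => rw [pow_zero]; exact isBounded_one 𝓑
  | succ n ih => rw [pow_succ]; exact h.isBounded_mul ih hM

variable {T : Type w} [Ring T] [Algebra V T] {𝓒 : ModBornology V T}

theorem IsAlgBorn.comap (j : A →ₐ[V] T) (h : IsAlgBorn 𝓒) :
    IsAlgBorn (𝓒.comap j.toLinearMap) := fun s t hs ht => by
  refine 𝓒.isBounded_subset (h hs ht) ?_
  rintro - ⟨-, ⟨a, ha, b, hb, rfl⟩, rfl⟩
  exact ⟨j a, ⟨a, ha, rfl⟩, j b, ⟨b, hb, rfl⟩, (map_mul j a b).symm⟩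

variable {π : V} {ε : ℝ}

theorem geomSumV_map (j : A →ₐ[V] T) (r : ℝ) (M : Submodule V A) :
    (geomSumV π ε r M).map j.toLinearMap = geomSumV π ε r (M.map j.toLinearMap) := by
  simp only [geomSumV, starV, Submodule.map_iSup, Submodule.map_pointwise_smul,
    Submodule.map_pow]

theorem SpecLeOne.comap (j : A →ₐ[V] T) {M : Submodule V A}
    (h : SpecLeOne π ε 𝓒 (M.map j.toLinearMap)) : SpecLeOne π ε (𝓒.comap j.toLinearMap) M := by
  intro r hr
  show 𝓒.IsBounded (j.toLinearMap '' (geomSumV π ε r M : Set A))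
  rw [← Submodule.map_coe, geomSumV_map]
  exact h r hr

/-- The preimage of `𝓛'` under `j` competes in the minimality clause defining `𝓛`. -/
theorem IsLinGrowthBorn.boundedMap_algHom {𝓑 𝓛 : ModBornology V A} {𝓑' 𝓛' : ModBornology V T}
    (h𝓛 : IsLinGrowthBorn π ε 𝓑 𝓛) (h𝓛' : IsLinGrowthBorn π ε 𝓑' 𝓛') (j : A →ₐ[V] T)
    (hj : BoundedMap 𝓑 𝓑' j.toLinearMap) : BoundedMap 𝓛 𝓛' j.toLinearMap :=
  h𝓛.2.2.2 (𝓛'.comap j.toLinearMap) (h𝓛'.1.comap j) (fun _ hs => h𝓛'.2.1 (hj hs))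
    fun M hM => SpecLeOne.comap j (h𝓛'.2.2.1 _ (by rwa [Submodule.map_coe]))

end Algebra

section TensorAlgebra

variable {V : Type u} [CommRing V]

theorem tensorSpan_mono {X Y : Type u} [AddCommGroup X] [Module V X] [AddCommGroup Y] [Module V Y]
    {M M' : Submodule V X} {N N' : Submodule V Y} (hM : M ≤ M') (hN : N ≤ N') :
    tensorSpan M N ≤ tensorSpan M' N' :=
  Submodule.span_mono (Set.image2_subset hM hN)

theorem smul_mul_self_tensorSpan_le {X Y : Type u} [AddCommGroup X] [Module V X] [AddCommGroup Y]
    [Module V Y] (c : V) (M : Submodule V X) (N : Submodule V Y) :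
    (c * c) • tensorSpan M N ≤ tensorSpan (c • M) (c • N) := by
  rw [tensorSpan, Submodule.smul_span]
  refine Submodule.span_mono ?_
  rintro - ⟨-, ⟨m, hm, n, hn, rfl⟩, rfl⟩
  exact ⟨c • m, ⟨m, hm, rfl⟩, c • n, ⟨n, hn, rfl⟩, TensorProduct.smul_tmul_smul c c m n⟩

variable {R S : Type u} [Ring R] [Algebra V R] [Ring S] [Algebra V S]

theorem tensorSpan_mul_le (M M' : Submodule V R) (N N' : Submodule V S) :
    tensorSpan M N * tensorSpan M' N' ≤ tensorSpan (M * M') (N * N') := by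
  rw [tensorSpan, tensorSpan, Submodule.span_mul_span]
  refine Submodule.span_le.mpr ?_
  rintro - ⟨-, ⟨m, hm, n, hn, rfl⟩, -, ⟨m', hm', n', hn', rfl⟩, rfl⟩
  show m ⊗ₜ[V] n * m' ⊗ₜ[V] n' ∈ tensorSpan (M * M') (N * N')
  rw [Algebra.TensorProduct.tmul_mul_tmul]
  exact Submodule.subset_span
    ⟨m * m', Submodule.mul_mem_mul hm hm', n * n', Submodule.mul_mem_mul hn hn', rfl⟩

theorem tensorSpan_pow_le (M : Submodule V R) (N : Submodule V S) (n : ℕ) :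
    tensorSpan M N ^ n ≤ tensorSpan (M ^ n) (N ^ n) := by
  induction n with
  | zero =>
    simp only [pow_zero]
    exact Submodule.one_le.mpr <| Submodule.subset_span
      ⟨1, Submodule.one_le.mp le_rfl, 1, Submodule.one_le.mp le_rfl, rfl⟩
  | succ n ih =>
    simp only [pow_succ]
    exact (mul_le_mul' ih le_rfl).trans (tensorSpan_mul_le _ _ _ _)

variable {𝓑R : ModBornology V R} {𝓑S : ModBornology V S} {𝓣 : ModBornology V (R ⊗[V] S)}

theorem IsTensorBorn.isAlgBorn (hR : IsAlgBorn 𝓑R) (hS : IsAlgBorn 𝓑S)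
    (h : IsTensorBorn 𝓑R 𝓑S 𝓣) : IsAlgBorn 𝓣 := fun s t hs ht => by
  obtain ⟨M, N, hM, hN, hs⟩ := (h s).mp hs
  obtain ⟨M', N', hM', hN', ht⟩ := (h t).mp ht
  refine 𝓣.isBounded_subset (h.isBounded_tensorSpan (hR.isBounded_mul hM hM')
    (hS.isBounded_mul hN hN')) ?_
  rintro - ⟨a, ha, b, hb, rfl⟩
  exact tensorSpan_mul_le M M' N N' (Submodule.mul_mem_mul (hs ha) (ht hb))

theorem IsTensorBorn.bornLE {𝓒R : ModBornology V R} {𝓒S : ModBornology V S}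
    {𝓣' : ModBornology V (R ⊗[V] S)} (h : IsTensorBorn 𝓑R 𝓑S 𝓣) (h' : IsTensorBorn 𝓒R 𝓒S 𝓣')
    (hR : BornLE 𝓑R 𝓒R) (hS : BornLE 𝓑S 𝓒S) : BornLE 𝓣 𝓣' := fun U hU => by
  obtain ⟨M, N, hM, hN, hU⟩ := (h U).mp hU
  exact (h' U).mpr ⟨M, N, hR hM, hS hN, hU⟩

theorem IsTensorBorn.boundedMap_includeLeft (h : IsTensorBorn 𝓑R 𝓑S 𝓣) :
    BoundedMap 𝓑R 𝓣
      (Algebra.TensorProduct.includeLeft (S := V) : R →ₐ[V] R ⊗[V] S).toLinearMap := by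
  intro s hs
  have := h.boundedBilin_mk hs (𝓑S.isBounded_of_finite (Set.finite_singleton 1))
  rwa [Set.image2_singleton_right] at this

theorem IsTensorBorn.boundedMap_includeRight (h : IsTensorBorn 𝓑R 𝓑S 𝓣) :
    BoundedMap 𝓑S 𝓣 (Algebra.TensorProduct.includeRight : S →ₐ[V] R ⊗[V] S).toLinearMap := by
  intro t ht
  have := h.boundedBilin_mk (𝓑R.isBounded_of_finite (Set.finite_singleton 1)) ht
  rwa [Set.image2_singleton_left] at this

theorem IsTensorBorn.bornLE_of_boundedMap {𝓒 : ModBornology V (R ⊗[V] S)}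
    (h : IsTensorBorn 𝓑R 𝓑S 𝓣) (h𝓒 : IsAlgBorn 𝓒)
    (hl : BoundedMap 𝓑R 𝓒 (Algebra.TensorProduct.includeLeft (S := V)).toLinearMap)
    (hr : BoundedMap 𝓑S 𝓒 Algebra.TensorProduct.includeRight.toLinearMap) : BornLE 𝓣 𝓒 := by
  intro U hU
  obtain ⟨M, N, hM, hN, hU⟩ := (h U).mp hU
  refine 𝓒.isBounded_of_subset_span (h𝓒 (hl hM) (hr hN)) (hU.trans (Submodule.span_mono ?_))
  rintro - ⟨m, hm, n, hn, rfl⟩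
  refine ⟨m ⊗ₜ[V] 1, ⟨m, hm, rfl⟩, 1 ⊗ₜ[V] n, ⟨n, hn, rfl⟩, ?_⟩
  simp only [Algebra.TensorProduct.tmul_mul_tmul, mul_one, one_mul]

end TensorAlgebra

section SpectralRadius

variable {ε : ℝ}

theorem cexp_zpow_neg (ε r : ℝ) (n : ℕ) :
    cexp ε (r ^ (-(n : ℤ))) = ⌈n * (Real.log r / -Real.log ε)⌉ := by
  rw [cexp, Real.log_zpow]
  push_cast
  ring_nf

theorem two_mul_toNat_ceil_div_four_le {x : ℝ} (hx : 4 ≤ x) : 2 * ⌈x / 4⌉.toNat ≤ ⌈x⌉.toNat := by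
  have h : ((2 * ⌈x / 4⌉ : ℤ) : ℝ) < ⌈x⌉ := by
    push_cast
    linarith [Int.ceil_lt_add_one (x / 4), Int.le_ceil x]
  have := Int.ceil_nonneg (show 0 ≤ x / 4 by linarith)
  have : 2 * ⌈x / 4⌉ < ⌈x⌉ := by exact_mod_cast h
  omega

theorem exists_two_mul_cexp_le (hε0 : 0 < ε) (hε1 : ε < 1) {r : ℝ} (hr : 1 < r) :
    ∃ s > 1, ∃ n₀ : ℕ, ∀ n ≥ n₀,
      2 * (cexp ε (s ^ (-(n : ℤ)))).toNat ≤ (cexp ε (r ^ (-(n : ℤ)))).toNat := by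
  have hr0 : 0 < r := one_pos.trans hr
  set c := Real.log r / -Real.log ε
  have hc : 0 < c := div_pos (Real.log_pos hr) (neg_pos.mpr (Real.log_neg hε0 hε1))
  refine ⟨r ^ (4⁻¹ : ℝ), Real.one_lt_rpow hr (by norm_num), ⌈4 / c⌉₊, fun n hn => ?_⟩
  have hn4 : 4 ≤ n * c := (div_le_iff₀ hc).mp ((Nat.le_ceil _).trans (by exact_mod_cast hn))
  rw [cexp_zpow_neg, cexp_zpow_neg, Real.log_rpow hr0]
  convert two_mul_toNat_ceil_div_four_le hn4 using 4
  ring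

variable {V : Type u} [CommRing V] {π : V}

theorem pow_smul_le_pow_smul {A : Type v} [Ring A] [Algebra V A] {a b : ℕ} (h : b ≤ a)
    (P : Submodule V A) : π ^ a • P ≤ π ^ b • P := by
  rw [← Nat.add_sub_cancel' h, pow_add, mul_smul]
  exact smul_le_smul_left _ (Submodule.smul_le_self_of_tower _ P)

variable {R S : Type u} [Ring R] [Algebra V R] [Ring S] [Algebra V S]

theorem starV_tensorSpan_le {r s : ℝ} (h : 2 * (cexp ε s).toNat ≤ (cexp ε r).toNat)
    (M : Submodule V R) (N : Submodule V S) :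
    starV π ε r (tensorSpan M N) ≤ tensorSpan (starV π ε s M) (starV π ε s N) := by
  refine (pow_smul_le_pow_smul h _).trans ?_
  rw [two_mul, pow_add]
  exact smul_mul_self_tensorSpan_le _ M N

theorem IsTensorBorn.specLeOne (hε0 : 0 < ε) (hε1 : ε < 1) {𝓑R : ModBornology V R}
    {𝓑S : ModBornology V S} {𝓣 : ModBornology V (R ⊗[V] S)} (hR : IsAlgBorn 𝓑R)
    (hS : IsAlgBorn 𝓑S)
    (hRspec : ∀ M : Submodule V R, 𝓑R.IsBounded (M : Set R) → SpecLeOne π ε 𝓑R M)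
    (hSspec : ∀ N : Submodule V S, 𝓑S.IsBounded (N : Set S) → SpecLeOne π ε 𝓑S N)
    (h : IsTensorBorn 𝓑R 𝓑S 𝓣) {P : Submodule V (R ⊗[V] S)}
    (hP : 𝓣.IsBounded (P : Set (R ⊗[V] S))) : SpecLeOne π ε 𝓣 P := by
  intro r hr
  obtain ⟨M, N, hM, hN, hPMN⟩ := (h _).mp hP
  obtain ⟨s, hs, n₀, hn₀⟩ := exists_two_mul_cexp_le hε0 hε1 hr
  have hle : geomSumV π ε r P ≤
      tensorSpan ((1 ⊔ M) ^ n₀ ⊔ geomSumV π ε s M) ((1 ⊔ N) ^ n₀ ⊔ geomSumV π ε s N) := by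
    refine iSup_le fun n => ?_
    have hPn : P ^ n ≤ tensorSpan (M ^ n) (N ^ n) :=
      (pow_le_pow_left' (SetLike.coe_subset_coe.mp hPMN) n).trans (tensorSpan_pow_le M N n)
    rcases lt_or_ge n n₀ with hn | hn
    · refine (Submodule.smul_le_self_of_tower _ _).trans (hPn.trans (tensorSpan_mono ?_ ?_)) <;>
        exact le_sup_of_le_left
          ((pow_le_pow_left' le_sup_right n).trans (pow_le_pow_right' le_sup_left hn.le))
    · calc starV π ε (r ^ (-(n : ℤ))) (P ^ n)
          ≤ starV π ε (r ^ (-(n : ℤ))) (tensorSpan (M ^ n) (N ^ n)) := smul_le_smul_left _ hPn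
        _ ≤ tensorSpan (starV π ε (s ^ (-(n : ℤ))) (M ^ n)) (starV π ε (s ^ (-(n : ℤ))) (N ^ n)) :=
          starV_tensorSpan_le (hn₀ n hn) _ _
        _ ≤ _ := tensorSpan_mono
          (le_sup_of_le_right (le_iSup (fun k : ℕ => starV π ε (s ^ (-(k : ℤ))) (M ^ k)) n))
          (le_sup_of_le_right (le_iSup (fun k : ℕ => starV π ε (s ^ (-(k : ℤ))) (N ^ k)) n))
  refine 𝓣.isBounded_subset (h.isBounded_tensorSpan ?_ ?_) hle
  · exact 𝓑R.isBounded_sup (hR.isBounded_pow (𝓑R.isBounded_sup (isBounded_one 𝓑R) hM) n₀)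
      (hRspec M hM s hs)
  · exact 𝓑S.isBounded_sup (hS.isBounded_pow (𝓑S.isBounded_sup (isBounded_one 𝓑S) hN) n₀)
      (hSspec N hN s hs)

end SpectralRadius

theorem IsLinGrowthBorn.isBounded_tensor_iff {V : Type u} [CommRing V] {π : V} {ε : ℝ}
    (hε0 : 0 < ε) (hε1 : ε < 1) {R S : Type u} [Ring R] [Algebra V R] [Ring S] [Algebra V S]
    {𝓑R 𝓛R : ModBornology V R} {𝓑S 𝓛S : ModBornology V S}
    {𝓣 𝓛T 𝓣' : ModBornology V (R ⊗[V] S)} (h𝓛R : IsLinGrowthBorn π ε 𝓑R 𝓛R)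
    (h𝓛S : IsLinGrowthBorn π ε 𝓑S 𝓛S) (h𝓣 : IsTensorBorn 𝓑R 𝓑S 𝓣)
    (h𝓛T : IsLinGrowthBorn π ε 𝓣 𝓛T) (h𝓣' : IsTensorBorn 𝓛R 𝓛S 𝓣') (U : Set (R ⊗[V] S)) :
    𝓛T.IsBounded U ↔ 𝓣'.IsBounded U := by
  refine ⟨fun hU => h𝓛T.2.2.2 𝓣' (h𝓣'.isAlgBorn h𝓛R.1 h𝓛S.1) (h𝓣.bornLE h𝓣' h𝓛R.2.1 h𝓛S.2.1)
    (fun _ => h𝓣'.specLeOne hε0 hε1 h𝓛R.1 h𝓛S.1 h𝓛R.2.2.1 h𝓛S.2.2.1) hU, fun hU => ?_⟩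
  exact h𝓣'.bornLE_of_boundedMap h𝓛T.1 (h𝓛R.boundedMap_algHom h𝓛T _ h𝓣.boundedMap_includeLeft)
    (h𝓛S.boundedMap_algHom h𝓛T _ h𝓣.boundedMap_includeRight) hU

end Born

theorem linearGrowth_of_tensor_general
    {V : Type u} [CommRing V]
    (π : V)
    (ε : ℝ) (hε0 : 0 < ε) (hε1 : ε < 1)
    {R : Type u} [Ring R] [Algebra V R] (𝓑R : ModBornology V R)
    {S : Type u} [Ring S] [Algebra V S] (𝓑S : ModBornology V S)
    (𝓛R : ModBornology V R) (h𝓛R : IsLinGrowthBorn π ε 𝓑R 𝓛R)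
    (𝓛S : ModBornology V S) (h𝓛S : IsLinGrowthBorn π ε 𝓑S 𝓛S)
    (𝓣 : ModBornology V (R ⊗[V] S)) (h𝓣 : IsTensorBorn 𝓑R 𝓑S 𝓣)
    (𝓛T : ModBornology V (R ⊗[V] S)) (h𝓛T : IsLinGrowthBorn π ε 𝓣 𝓛T)
    (𝓣' : ModBornology V (R ⊗[V] S)) (h𝓣' : IsTensorBorn 𝓛R 𝓛S 𝓣') :
    -- the linear growth bornology of `R ⊗ S` is the tensor product of the linear growth
    -- bornologies
    (∀ U : Set (R ⊗[V] S), 𝓛T.IsBounded U ↔ 𝓣'.IsBounded U)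
    -- and consequently, for completions `CR`, `CS`, `CT` of `(R,𝓛R)`, `(S,𝓛S)` and
    -- `(R ⊗ S, 𝓛T)`, the completion `CT` is a complete bornological tensor product of
    -- `CR` and `CS`
    ∧ (∀ (CR : Type u) (_ : AddCommGroup CR) (_ : Module V CR)
        (𝓑CR : ModBornology V CR) (ιR : R →ₗ[V] CR),
        IsCompletion π 𝓛R 𝓑CR ιR →
       ∀ (CS : Type u) (_ : AddCommGroup CS) (_ : Module V CS)
        (𝓑CS : ModBornology V CS) (ιS : S →ₗ[V] CS),
        IsCompletion π 𝓛S 𝓑CS ιS →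
       ∀ (CT : Type u) (_ : AddCommGroup CT) (_ : Module V CT)
        (𝓑CT : ModBornology V CT) (ιT : R ⊗[V] S →ₗ[V] CT),
        IsCompletion π 𝓛T 𝓑CT ιT →
        ∃ β : CR →ₗ[V] CS →ₗ[V] CT,
          BoundedBilin 𝓑CR 𝓑CS 𝓑CT β ∧
          (∀ (r : R) (s : S), β (ιR r) (ιS s) = ιT (r ⊗ₜ[V] s)) ∧
          ∀ (W : Type u) (_ : AddCommGroup W) (_ : Module V W) (𝓑W : ModBornology V W),
            BornComplete π 𝓑W → ∀ γ : CR →ₗ[V] CS →ₗ[V] W, BoundedBilin 𝓑CR 𝓑CS 𝓑W γ →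
            ∃! h : CT →ₗ[V] W, BoundedMap 𝓑CT 𝓑W h ∧ ∀ (x : CR) (y : CS),
              h (β x y) = γ x y) := by
  have hT : ∀ U, 𝓛T.IsBounded U ↔ 𝓣'.IsBounded U :=
    h𝓛R.isBounded_tensor_iff hε0 hε1 h𝓛S h𝓣 h𝓛T h𝓣'
  refine ⟨hT, fun CR _ _ _ _ hCR CS _ _ _ _ hCS CT _ _ _ _ hCT => ?_⟩
  exact IsTensorBorn.exists_universal_bilin_of_isCompletion (fun U => (hT U).trans (h𝓣' U))
    hCR hCS hCT

/-- **Statement 10.** Let `R` and `S` be bornological `V`-algebras.  The linear growth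
bornology of the bornological tensor product `R ⊗ S` equals the tensor product of the
linear growth bornologies of `R` and `S`; consequently the linear growth completion of
`R ⊗ S` is naturally a complete bornological tensor product of the linear growth
completions of `R` and of `S`. -/
theorem linearGrowth_of_tensor
    {V : Type u} [CommRing V] [IsDomain V] [IsDiscreteValuationRing V]
    (π : V) (hπ : Irreducible π) (hV : IsAdicComplete (Ideal.span {π}) V)
    (ε : ℝ) (hε0 : 0 < ε) (hε1 : ε < 1)
    {R : Type u} [Ring R] [Algebra V R] (𝓑R : ModBornology V R) (h𝓑R : IsAlgBorn 𝓑R)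
    {S : Type u} [Ring S] [Algebra V S] (𝓑S : ModBornology V S) (h𝓑S : IsAlgBorn 𝓑S)
    (𝓛R : ModBornology V R) (h𝓛R : IsLinGrowthBorn π ε 𝓑R 𝓛R)
    (𝓛S : ModBornology V S) (h𝓛S : IsLinGrowthBorn π ε 𝓑S 𝓛S)
    (𝓣 : ModBornology V (R ⊗[V] S)) (h𝓣 : IsTensorBorn 𝓑R 𝓑S 𝓣)
    (𝓛T : ModBornology V (R ⊗[V] S)) (h𝓛T : IsLinGrowthBorn π ε 𝓣 𝓛T)
    (𝓣' : ModBornology V (R ⊗[V] S)) (h𝓣' : IsTensorBorn 𝓛R 𝓛S 𝓣') :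
    -- the linear growth bornology of `R ⊗ S` is the tensor product of the linear growth
    -- bornologies
    (∀ U : Set (R ⊗[V] S), 𝓛T.IsBounded U ↔ 𝓣'.IsBounded U)
    -- and consequently, for completions `CR`, `CS`, `CT` of `(R,𝓛R)`, `(S,𝓛S)` and
    -- `(R ⊗ S, 𝓛T)`, the completion `CT` is a complete bornological tensor product of
    -- `CR` and `CS`
    ∧ (∀ (CR : Type u) (_ : AddCommGroup CR) (_ : Module V CR)
        (𝓑CR : ModBornology V CR) (ιR : R →ₗ[V] CR),
        IsCompletion π 𝓛R 𝓑CR ιR →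
       ∀ (CS : Type u) (_ : AddCommGroup CS) (_ : Module V CS)
        (𝓑CS : ModBornology V CS) (ιS : S →ₗ[V] CS),
        IsCompletion π 𝓛S 𝓑CS ιS →
       ∀ (CT : Type u) (_ : AddCommGroup CT) (_ : Module V CT)
        (𝓑CT : ModBornology V CT) (ιT : R ⊗[V] S →ₗ[V] CT),
        IsCompletion π 𝓛T 𝓑CT ιT →
        ∃ β : CR →ₗ[V] CS →ₗ[V] CT,
          BoundedBilin 𝓑CR 𝓑CS 𝓑CT β ∧
          (∀ (r : R) (s : S), β (ιR r) (ιS s) = ιT (r ⊗ₜ[V] s)) ∧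
          ∀ (W : Type u) (_ : AddCommGroup W) (_ : Module V W) (𝓑W : ModBornology V W),
            BornComplete π 𝓑W → ∀ γ : CR →ₗ[V] CS →ₗ[V] W, BoundedBilin 𝓑CR 𝓑CS 𝓑W γ →
            ∃! h : CT →ₗ[V] W, BoundedMap 𝓑CT 𝓑W h ∧ ∀ (x : CR) (y : CS),
              h (β x y) = γ x y) :=
  linearGrowth_of_tensor_general π ε hε0 hε1 𝓑R 𝓑S 𝓛R h𝓛R 𝓛S h𝓛S 𝓣 h𝓣 𝓛T h𝓛T 𝓣' h𝓣'
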